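/- arXiv:2604.23965 — 3 statements merged into one kernel-verified Lean document; each statement's English description precedes it below -/
import Mathlib

section
/- Fix a positive integer n. For any integers i, j, i', j' ∈ [−n, n] with (i, j) ≠ (i', j'), the following hold: (1) the closed horizontal (1/(100n))-neighborhood N^hor_{1/(100n)}(G'_{i,j}) is contained in P(2); (2) N^hor_{1/(100n)}(G'_{i,j}) is disjoint from N^hor_{1/(100n)}(G'_{i',j'}). -/
noncomputable section

open Set Metric

/-- Euclidean 3-space. -/
abbrev R3 : Type := EuclideanSpace ℝ (Fin 3)

/-- The point `(a, b, c)` of `ℝ³`. -/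
noncomputable def mk3 (a b c : ℝ) : R3 := (WithLp.equiv 2 (Fin 3 → ℝ)).symm ![a, b, c]

/-- The `Y`-shaped solid `P(r) ⊂ ℝ³`. -/
def Pset (r : ℝ) : Set R3 :=
  {p | ((p 0) ^ 2 + (p 1) ^ 2 ≤ r ^ 2 ∧ 0 ≤ p 2 ∧ p 2 ≤ 8) ∨
       ((p 0) ^ 2 + (p 1 + p 2) ^ 2 ≤ r ^ 2 ∧ -8 ≤ p 2 ∧ p 2 ≤ 0) ∨
       ((p 0) ^ 2 + (p 1 - p 2) ^ 2 ≤ r ^ 2 ∧ -8 ≤ p 2 ∧ p 2 ≤ 0)}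

/-- The closed horizontal `r`-neighborhood `N^hor_r(S)` of a subset `S ⊂ ℝ³`. -/
def Nhor (r : ℝ) (S : Set R3) : Set R3 :=
  {p | ∃ q ∈ S, q 2 = p 2 ∧ (p 0 - q 0) ^ 2 + (p 1 - q 1) ^ 2 ≤ r ^ 2}

/-- The `Y`-shaped graph `G = ⋂_{r>0} P(r)`. -/
def Ggraph : Set R3 :=
  {p | (p 0 = 0 ∧ p 1 = 0 ∧ 0 ≤ p 2 ∧ p 2 ≤ 8) ∨
       (∃ ε : ℝ, (ε = 1 ∨ ε = -1) ∧
         p 0 = 0 ∧ p 1 = ε * p 2 ∧ -8 ≤ p 2 ∧ p 2 ≤ 0)}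

/-- The perturbed `Y`-shaped graph `G' ⊂ P(3)` (depending on the positive integer `n`). -/
def Ggraph' (n : ℕ) : Set R3 :=
  {p | (p 0 = 0 ∧ p 1 = 0 ∧ 0 ≤ p 2 ∧ p 2 ≤ 8) ∨
       (∃ ε : ℝ, (ε = 1 ∨ ε = -1) ∧
         p 0 = ε * p 2 ∧ p 1 = 0 ∧ -(1 / (10 * (n : ℝ))) ≤ p 2 ∧ p 2 ≤ 0) ∨
       (∃ ε : ℝ, (ε = 1 ∨ ε = -1) ∧
         p 0 = -ε / (10 * (n : ℝ)) ∧ p 1 = ε * (p 2 + 1 / (10 * (n : ℝ))) ∧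
         -8 ≤ p 2 ∧ p 2 ≤ -(1 / (10 * (n : ℝ))))}

/-- Horizontal translation of a subset of `ℝ³` by the vector `(a, b, 0)`. -/
def translateH (a b : ℝ) (S : Set R3) : Set R3 :=
  {p | ∃ q ∈ S, p 0 = q 0 + a ∧ p 1 = q 1 + b ∧ p 2 = q 2}

/-- The translate `G'_{i,j}` of `G'` by the horizontal vector `(i/n, j/n, 0)`. -/
def Gij (n : ℕ) (i j : ℤ) : Set R3 :=
  translateH ((i : ℝ) / (n : ℝ)) ((j : ℝ) / (n : ℝ)) (Ggraph' n)

/-- (The interior of) the horizontal boundary disk `D₁` of `P(3)`. -/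
def D1int : Set R3 := {p | p 2 = 8 ∧ (p 0) ^ 2 + (p 1) ^ 2 < 9}

/-- (The interior of) the horizontal boundary disk `D₂` of `P(3)`. -/
def D2int : Set R3 := {p | p 2 = -8 ∧ (p 0) ^ 2 + (p 1 - 8) ^ 2 < 9}

/-- (The interior of) the horizontal boundary disk `D₃` of `P(3)`. -/
def D3int : Set R3 := {p | p 2 = -8 ∧ (p 0) ^ 2 + (p 1 + 8) ^ 2 < 9}

/-- The vertical boundary `∂_ver P(3)`: the boundary of `P(3)` minus the interiors of the
three horizontal disks `D₁, D₂, D₃`. -/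
def verBoundary : Set R3 := frontier (Pset 3) \ (D1int ∪ D2int ∪ D3int)

end

noncomputable section

private lemma Gstruct (n : ℕ) (hn : 0 < n) {g g' : R3}
    (hg : g ∈ Ggraph' n) (hg' : g' ∈ Ggraph' n) (hz : g 2 = g' 2) :
    (g 1 = g' 1 ∧ |g 0 - g' 0| ≤ 2 * (1 / (10 * (n : ℝ)))) ∨
    (g 0 - g' 0 = 2 * (1 / (10 * (n : ℝ))) ∨ g 0 - g' 0 = -(2 * (1 / (10 * (n : ℝ))))) := by
  have hN : (0:ℝ) < n := by exact_mod_cast hn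
  have hδ : (0:ℝ) < 1 / (10 * n) := by positivity
  simp only [Ggraph', Set.mem_setOf_eq] at hg hg'
  by_cases hcc : g 2 < -(1 / (10 * (n:ℝ)))
  · -- both points lie strictly in the C branch
    rcases hg with ⟨a0, a1, a2, a3⟩ | ⟨ε, hε, a0, a1, a2, a3⟩ | ⟨ε, hε, a0, a1, a2, a3⟩
    · exfalso; linarith
    · exfalso; linarith
    rcases hg' with ⟨b0, b1, b2, b3⟩ | ⟨ε', hε', b0, b1, b2, b3⟩ | ⟨ε', hε', b0, b1, b2, b3⟩
    · exfalso; rw [hz] at hcc; linarith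
    · exfalso; rw [hz] at hcc; linarith
    rcases hε with rfl | rfl <;> rcases hε' with rfl | rfl
    · left
      refine ⟨by rw [a1, b1, hz], ?_⟩
      have h0 : g 0 - g' 0 = 0 := by rw [a0, b0]; ring
      rw [h0, abs_zero]; positivity
    · right; right; rw [a0, b0]; ring
    · right; left; rw [a0, b0]; ring
    · left
      refine ⟨by rw [a1, b1, hz], ?_⟩
      have h0 : g 0 - g' 0 = 0 := by rw [a0, b0]; ring
      rw [h0, abs_zero]; positivity
  · -- g 2 ≥ -δ : both points have second coordinate 0 and |first| ≤ δ
    push_neg at hcc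
    have key : ∀ h : R3, ((h 0 = 0 ∧ h 1 = 0 ∧ 0 ≤ h 2 ∧ h 2 ≤ 8) ∨
        (∃ ε : ℝ, (ε = 1 ∨ ε = -1) ∧
          h 0 = ε * h 2 ∧ h 1 = 0 ∧ -(1 / (10 * (n : ℝ))) ≤ h 2 ∧ h 2 ≤ 0) ∨
        (∃ ε : ℝ, (ε = 1 ∨ ε = -1) ∧
          h 0 = -ε / (10 * (n : ℝ)) ∧ h 1 = ε * (h 2 + 1 / (10 * (n : ℝ))) ∧
          -8 ≤ h 2 ∧ h 2 ≤ -(1 / (10 * (n : ℝ))))) →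
        -(1 / (10 * (n:ℝ))) ≤ h 2 → h 1 = 0 ∧ |h 0| ≤ 1 / (10 * (n:ℝ)) := by
      rintro h (⟨a0, a1, a2, a3⟩ | ⟨ε, hε, a0, a1, a2, a3⟩ | ⟨ε, hε, a0, a1, a2, a3⟩) hge
      · exact ⟨a1, by rw [a0, abs_zero]; positivity⟩
      · have hε1 : |ε| = 1 := by rcases hε with rfl | rfl <;> norm_num
        refine ⟨a1, ?_⟩
        rw [a0, abs_mul, hε1, one_mul, abs_le]
        exact ⟨a2, by linarith⟩
      · have hzδ : h 2 = -(1 / (10 * (n:ℝ))) := le_antisymm a3 hge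
        have hε1 : |(-ε)| = 1 := by rcases hε with rfl | rfl <;> norm_num
        refine ⟨by rw [a1, hzδ]; ring, ?_⟩
        rw [a0, abs_div, hε1, abs_of_pos (by positivity : (0:ℝ) < 10 * n)]

    have k1 := key g hg hcc
    have k2 := key g' hg' (by rw [← hz]; exact hcc)
    left
    refine ⟨by rw [k1.1, k2.1], ?_⟩
    calc |g 0 - g' 0| ≤ |g 0| + |g' 0| := abs_sub _ _
    _ ≤ 2 * (1 / (10 * (n:ℝ))) := by linarith [k1.2, k2.2]

private lemma abs_of_sq_le_sq' {x r : ℝ} (hr : 0 ≤ r) (h : x ^ 2 ≤ r ^ 2) : |x| ≤ r := by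
  nlinarith [sq_abs x, abs_nonneg x]

private lemma sq_bound {x c r : ℝ} (h : |x - c| ≤ r) (hc : |c| ≤ 1.2) (hr : r ≤ 1/100) :
    x ^ 2 ≤ 2 := by
  have h1 : |x| ≤ |x - c| + |c| := by
    calc |x| = |(x - c) + c| := by rw [sub_add_cancel]
    _ ≤ |x - c| + |c| := abs_add_le _ _
  have h2 : |x| ≤ 1.21 := by linarith
  nlinarith [sq_abs x, abs_nonneg x]

private lemma contra1 {x a t : ℝ} (ht : 0 < t) (hx : |x| ≤ t/5) (ha : 1 ≤ |a|)
    (h : (x + a*t)^2 ≤ 4*(t/100)^2) : False := by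
  rcases abs_le.mp hx with ⟨hx1, hx2⟩
  rcases le_abs.mp ha with h1 | h1
  · nlinarith [mul_nonneg (sub_nonneg.mpr h1) ht.le]
  · nlinarith [mul_nonneg (sub_nonneg.mpr h1) ht.le]

private lemma contrab {b t : ℝ} (ht : 0 < t) (hb : 1 ≤ |b|)
    (h : (b*t)^2 ≤ 4*(t/100)^2) : False := by
  rcases le_abs.mp hb with h1 | h1
  · nlinarith [mul_nonneg (sub_nonneg.mpr h1) ht.le]
  · nlinarith [mul_nonneg (sub_nonneg.mpr h1) ht.le]

private lemma contra2 {s k t : ℝ} (ht : 0 < t) (hs : s = t/5 ∨ s = -(t/5))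
    (hk : k = 0 ∨ 1 ≤ |k|) (h : (s + k*t)^2 ≤ 4*(t/100)^2) : False := by
  rcases hs with rfl | rfl <;> rcases hk with rfl | hk
  · nlinarith
  · rcases le_abs.mp hk with h1 | h1 <;>
      nlinarith [mul_nonneg (sub_nonneg.mpr h1) ht.le]
  · nlinarith
  · rcases le_abs.mp hk with h1 | h1 <;>
      nlinarith [mul_nonneg (sub_nonneg.mpr h1) ht.le]

private lemma par_ineq {x0 y0 a0 b0 a1 b1 r : ℝ}
    (h : (x0 - a0)^2 + (y0 - b0)^2 ≤ r^2) (h' : (x0 - a1)^2 + (y0 - b1)^2 ≤ r^2) :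
    (a0 - a1)^2 + (b0 - b1)^2 ≤ 4*r^2 := by
  nlinarith [sq_nonneg ((x0 - a0) + (x0 - a1)), sq_nonneg ((y0 - b0) + (y0 - b1))]

private lemma drop_right {A B C : ℝ} (h : A + B ≤ C) (hB : 0 ≤ B) : A ≤ C := by linarith
private lemma drop_left {A B C : ℝ} (h : A + B ≤ C) (hA : 0 ≤ A) : B ≤ C := by linarith

set_option maxHeartbeats 1000000 in
/-- Lemma `packing`.
Fix a positive integer `n`.  For integers `i, j, i', j' ∈ [-n, n]` with `(i,j) ≠ (i',j')`:
(1) the closed horizontal `1/(100n)`-neighborhood of `G'_{i,j}` is contained in `P(2)`;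
(2) the closed horizontal `1/(100n)`-neighborhoods of `G'_{i,j}` and of `G'_{i',j'}` are
disjoint. -/
theorem packing_lemma (n : ℕ) (hn : 0 < n) (i j i' j' : ℤ)
    (hi : |i| ≤ (n : ℤ)) (hj : |j| ≤ (n : ℤ))
    (hi' : |i'| ≤ (n : ℤ)) (hj' : |j'| ≤ (n : ℤ))
    (hne : (i, j) ≠ (i', j')) :
    Nhor (1 / (100 * (n : ℝ))) (Gij n i j) ⊆ Pset 2 ∧
    Disjoint (Nhor (1 / (100 * (n : ℝ))) (Gij n i j))
      (Nhor (1 / (100 * (n : ℝ))) (Gij n i' j')) := by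
  have hN : (1:ℝ) ≤ n := by exact_mod_cast hn
  have hN0 : (0:ℝ) < n := by linarith
  have hρ0 : (0:ℝ) < 1 / (100 * n) := by positivity
  have hρ : 1 / (100 * (n:ℝ)) ≤ 1/100 := by
    rw [div_le_div_iff₀ (by positivity) (by norm_num)]; nlinarith
  have hδ : 1 / (10 * (n:ℝ)) ≤ 1/10 := by
    rw [div_le_div_iff₀ (by positivity) (by norm_num)]; nlinarith
  have hδ0 : (0:ℝ) < 1 / (10 * n) := by positivity
  have habs : ∀ k : ℤ, |k| ≤ (n:ℤ) → |(k:ℝ)/n| ≤ 1 := by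
    intro k hk
    rw [abs_div, abs_of_pos hN0, div_le_one hN0]
    exact_mod_cast hk
  have hiN := habs i hi; have hjN := habs j hj
  constructor
  · rintro p hp
    simp only [Nhor, Gij, translateH, Set.mem_setOf_eq] at hp
    obtain ⟨q, ⟨g, hg, hq0, hq1, hq2⟩, hz, hd⟩ := hp
    have hd0 : |p 0 - q 0| ≤ 1 / (100 * n) :=
      abs_of_sq_le_sq' hρ0.le (by nlinarith [sq_nonneg (p 1 - q 1)])
    have hd1 : |p 1 - q 1| ≤ 1 / (100 * n) :=
      abs_of_sq_le_sq' hρ0.le (by nlinarith [sq_nonneg (p 0 - q 0)])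
    have hp2 : p 2 = g 2 := by rw [← hz, hq2]
    simp only [Ggraph', Set.mem_setOf_eq] at hg
    simp only [Pset, Set.mem_setOf_eq]
    rcases hg with ⟨a0, a1, a2, a3⟩ | ⟨ε, hε, a0, a1, a2, a3⟩ | ⟨ε, hε, a0, a1, a2, a3⟩
    · -- vertical segment: 0 ≤ z ≤ 8
      left
      have b0 : p 0 ^ 2 ≤ 2 := by
        refine sq_bound (c := (i:ℝ)/n) ?_ (by rw [abs_div, abs_of_pos hN0] at hiN ⊢; linarith) hρ
        have : q 0 = (i:ℝ)/n := by rw [hq0, a0, zero_add]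
        rwa [← this]
      have b1 : p 1 ^ 2 ≤ 2 := by
        refine sq_bound (c := (j:ℝ)/n) ?_ (by linarith) hρ
        have : q 1 = (j:ℝ)/n := by rw [hq1, a1, zero_add]
        rwa [← this]
      refine ⟨by norm_num; linarith, by rw [hp2]; exact a2, by rw [hp2]; exact a3⟩
    · -- middle slanted part: -δ ≤ z ≤ 0
      have hεa : |ε| = 1 := by rcases hε with rfl | rfl <;> norm_num
      right; left
      refine ⟨?_, by rw [hp2]; linarith, by rw [hp2]; exact a3⟩
      have b0 : p 0 ^ 2 ≤ 2 := by
        refine sq_bound (c := ε * g 2 + (i:ℝ)/n) ?_ ?_ hρ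
        · rwa [hq0, a0] at hd0
        · have h1 : |ε * g 2| ≤ 1/10 := by
            rw [abs_mul, hεa, one_mul, abs_le]; constructor <;> linarith
          calc |ε * g 2 + (i:ℝ)/n| ≤ |ε * g 2| + |(i:ℝ)/n| := abs_add_le _ _
          _ ≤ 1.2 := by linarith
      have b1 : (p 1 + p 2) ^ 2 ≤ 2 := by
        refine sq_bound (c := (j:ℝ)/n + p 2) ?_ ?_ hρ
        · have : p 1 + p 2 - ((j:ℝ)/n + p 2) = p 1 - q 1 := by rw [hq1, a1]; ring
          rwa [this]
        · have h1 : |p 2| ≤ 1/10 := by rw [hp2, abs_le]; constructor <;> linarith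
          calc |(j:ℝ)/n + p 2| ≤ |(j:ℝ)/n| + |p 2| := abs_add_le _ _
          _ ≤ 1.2 := by linarith
      norm_num; linarith
    · -- lower slanted legs: -8 ≤ z ≤ -δ
      have hb0 : p 0 ^ 2 ≤ 2 := by
        refine sq_bound (c := -ε / (10 * n) + (i:ℝ)/n) ?_ ?_ hρ
        · rwa [hq0, a0] at hd0
        · have hεa : |(-ε)| = 1 := by rcases hε with rfl | rfl <;> norm_num
          have h1 : |-ε / (10 * (n:ℝ))| = 1/(10*n) := by
            rw [abs_div, hεa, abs_of_pos (by positivity : (0:ℝ) < 10*n)]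
          calc |-ε / (10 * (n:ℝ)) + (i:ℝ)/n| ≤ |-ε / (10 * (n:ℝ))| + |(i:ℝ)/n| := abs_add_le _ _
          _ ≤ 1.2 := by rw [h1]; linarith
      rcases hε with rfl | rfl
      · -- ε = 1 : use the (p1 - p2) branch
        right; right
        refine ⟨?_, by rw [hp2]; exact a2, by rw [hp2]; linarith⟩
        have b1 : (p 1 - p 2) ^ 2 ≤ 2 := by
          refine sq_bound (c := 1/(10*n) + (j:ℝ)/n) ?_ ?_ hρ
          · have : p 1 - p 2 - (1/(10*(n:ℝ)) + (j:ℝ)/n) = p 1 - q 1 := by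
              rw [hq1, a1, hp2]; ring
            rwa [this]
          · have h1 : |1/(10*(n:ℝ))| = 1/(10*n) := abs_of_pos hδ0
            calc |1/(10*(n:ℝ)) + (j:ℝ)/n| ≤ |1/(10*(n:ℝ))| + |(j:ℝ)/n| := abs_add_le _ _
            _ ≤ 1.2 := by rw [h1]; linarith
        norm_num; linarith
      · -- ε = -1 : use the (p1 + p2) branch
        right; left
        refine ⟨?_, by rw [hp2]; exact a2, by rw [hp2]; linarith⟩
        have b1 : (p 1 + p 2) ^ 2 ≤ 2 := by
          refine sq_bound (c := -(1/(10*n)) + (j:ℝ)/n) ?_ ?_ hρ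
          · have : p 1 + p 2 - (-(1/(10*(n:ℝ))) + (j:ℝ)/n) = p 1 - q 1 := by
              rw [hq1, a1, hp2]; ring
            rwa [this]
          · have h1 : |(-(1/(10*(n:ℝ))))| = 1/(10*n) := by
              rw [abs_neg]; exact abs_of_pos hδ0
            calc |(-(1/(10*(n:ℝ)))) + (j:ℝ)/n| ≤ |(-(1/(10*(n:ℝ))))| + |(j:ℝ)/n| := abs_add_le _ _
            _ ≤ 1.2 := by rw [h1]; linarith
        norm_num; linarith
  · rw [Set.disjoint_left]
    rintro p hp hp'
    simp only [Nhor, Gij, translateH, Set.mem_setOf_eq] at hp hp'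
    obtain ⟨q, ⟨g, hg, hq0, hq1, hq2⟩, hz, hd⟩ := hp
    obtain ⟨q', ⟨g', hg', hq0', hq1', hq2'⟩, hz', hd'⟩ := hp'
    have hzz : g 2 = g' 2 := by rw [← hq2, ← hq2', hz, hz']
    rw [hq0, hq1] at hd
    rw [hq0', hq1'] at hd'
    have ht0 : (0:ℝ) < 1/(n:ℝ) := by positivity
    have honele : ∀ k k' : ℤ, k ≠ k' → 1 ≤ |(k:ℝ) - (k':ℝ)| := by
      intro k k' hkk
      have h1 : (1:ℤ) ≤ |k - k'| := Int.one_le_abs (sub_ne_zero.mpr hkk)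
      have h2 : ((1:ℤ):ℝ) ≤ ((|k - k'| : ℤ):ℝ) := by exact_mod_cast h1
      push_cast at h2
      linarith
    have key : ((g 0 - g' 0) + ((i:ℝ) - (i':ℝ))*(1/(n:ℝ)))^2 +
        ((g 1 - g' 1) + ((j:ℝ) - (j':ℝ))*(1/(n:ℝ)))^2 ≤ 4*((1/(n:ℝ))/100)^2 := by
      calc ((g 0 - g' 0) + ((i:ℝ) - (i':ℝ))*(1/(n:ℝ)))^2 +
          ((g 1 - g' 1) + ((j:ℝ) - (j':ℝ))*(1/(n:ℝ)))^2
          = ((g 0 + (i:ℝ)/n) - (g' 0 + (i':ℝ)/n))^2 +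
            ((g 1 + (j:ℝ)/n) - (g' 1 + (j':ℝ)/n))^2 := by ring
      _ ≤ 4 * (1/(100*(n:ℝ)))^2 := par_ineq hd hd'
      _ = 4*((1/(n:ℝ))/100)^2 := by ring
    rcases Gstruct n hn hg hg' hzz with ⟨he1, he0⟩ | h2
    · have e : g 1 - g' 1 = 0 := by rw [he1]; ring
      rw [e] at key
      by_cases hjj : j = j'
      · have hii : i ≠ i' := fun h => hne (by rw [h, hjj])
        have e2 : (j:ℝ) - (j':ℝ) = 0 := by rw [hjj]; ring
        rw [e2] at key
        have hx : |g 0 - g' 0| ≤ (1/(n:ℝ))/5 := by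
          have : 2 * (1 / (10 * (n:ℝ))) = (1/(n:ℝ))/5 := by ring
          rwa [this] at he0
        refine contra1 ht0 hx (honele i i' hii) ?_
        have h0 : (0:ℝ) ≤ ((0:ℝ) + (0:ℝ)*(1/(n:ℝ)))^2 := sq_nonneg _
        have := drop_right key h0
        calc ((g 0 - g' 0) + ((i:ℝ) - (i':ℝ))*(1/(n:ℝ)))^2
            = ((g 0 - g' 0) + ((i:ℝ) - (i':ℝ))*(1/(n:ℝ)))^2 + ((0:ℝ) + (0:ℝ)*(1/(n:ℝ)))^2 := by ring
        _ ≤ 4*((1/(n:ℝ))/100)^2 := key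
      · have h : (((j:ℝ) - (j':ℝ)) * (1/(n:ℝ)))^2 ≤ 4*((1/(n:ℝ))/100)^2 := by
          nlinarith [key, sq_nonneg ((g 0 - g' 0) + ((i:ℝ) - (i':ℝ))*(1/(n:ℝ)))]
        exact contrab ht0 (honele j j' hjj) h
    · have hs : g 0 - g' 0 = (1/(n:ℝ))/5 ∨ g 0 - g' 0 = -((1/(n:ℝ))/5) := by
        have e : 2 * (1 / (10 * (n:ℝ))) = (1/(n:ℝ))/5 := by ring
        rcases h2 with h2 | h2
        · left; rw [h2, e]
        · right; rw [h2, e]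
      have hk : (i:ℝ) - (i':ℝ) = 0 ∨ 1 ≤ |(i:ℝ) - (i':ℝ)| := by
        by_cases hii : i = i'
        · left; rw [hii]; ring
        · right; exact honele i i' hii
      have h : ((g 0 - g' 0) + ((i:ℝ) - (i':ℝ))*(1/(n:ℝ)))^2 ≤ 4*((1/(n:ℝ))/100)^2 :=
        drop_right key (sq_nonneg ((g 1 - g' 1) + ((j:ℝ) - (j':ℝ))*(1/(n:ℝ))))
      exact contra2 ht0 hs hk h

end
end

section
/- Let (M, g) be a Riemannian manifold, let X be a complete vector field on M (i.e., X generates a flow defined for all time), and suppose C := sup_{p∈M} ‖∇X(p)‖_g < ∞, where ∇ is the Levi-Civita connection. For p, q ∈ M let p(t) and q(t) denote the flow lines of X starting at p and q. Then for all t ∈ [0, ∞), d(p(t), q(t)) ≤ d(p, q)·e^{Ct}, where d denotes the Riemannian distance on M. -/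
noncomputable section

/-- Theorem 2 of Kunzinger–Schichl–Steinbauer–Vickers.
Let `(M,g)` be a Riemannian manifold, `X` a complete vector field on `M` (i.e. `X`
generates a flow `φ` defined for all time) with `C = sup_p ‖∇X(p)‖ < ∞`.  Then the flow
lines starting at `p` and `q` satisfy `d(p(t), q(t)) ≤ d(p,q)·e^{Ct}` for all `t ≥ 0`.

(Mathlib does not yet have Riemannian metrics or the Levi-Civita connection; the statement
is formalized for a real inner product space `E` — the setting in which it is applied in the
paper, where `∇X = DX` is the total derivative and `d` the induced distance.) -/
theorem dist_flow_le_exp_mul_of_norm_fderiv_le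
    {E : Type*} [NormedAddCommGroup E] [InnerProductSpace ℝ E]
    (X : E → E) (hX : Differentiable ℝ X)
    (C : ℝ) (hC : ∀ p : E, ‖fderiv ℝ X p‖ ≤ C)
    (φ : ℝ → E → E)
    (hφ0 : ∀ p : E, φ 0 p = p)
    (hφ : ∀ (p : E) (t : ℝ), HasDerivAt (fun s => φ s p) (X (φ t p)) t) :
    ∀ (p q : E) (t : ℝ), 0 ≤ t →
      dist (φ t p) (φ t q) ≤ dist p q * Real.exp (C * t) := by
  intro p q t ht
  have hC0 : 0 ≤ C := le_trans (norm_nonneg _) (hC 0)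
  have hlip : LipschitzWith C.toNNReal X := by
    apply lipschitzWith_of_nnnorm_fderiv_le hX
    intro x
    rw [← NNReal.coe_le_coe]
    simpa [Real.coe_toNNReal _ hC0] using hC x
  have key := dist_le_of_trajectories_ODE (v := fun _ => X) (a := 0) (b := t)
    (f := fun s => φ s p) (g := fun s => φ s q) (δ := dist p q)
    (fun _ => hlip)
    (fun s _ => (hφ p s).continuousAt.continuousWithinAt)
    (fun s _ => (hφ p s).hasDerivWithinAt)
    (fun s _ => (hφ q s).continuousAt.continuousWithinAt)
    (fun s _ => (hφ q s).hasDerivWithinAt)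
    (by simp [hφ0])
  have := key t ⟨ht, le_refl t⟩
  simpa [Real.coe_toNNReal _ hC0] using this

end
end

section
/- Fix a positive integer n. On P(3) define the vector field w by w(x,y,z) = (x+y, −x−y, 0) if |x+y| ≤ 1/(10n), and w(x,y,z) = ((1/(10n))·sign(x+y), −(1/(10n))·sign(x+y), 0) if |x+y| ≥ 1/(10n). Let ψ : P(3) → [0,1] be a smooth function with ψ ≡ 1 on P(2), ψ ≡ 0 on P(3)∖P(5/2), and ‖∇ψ‖ ≤ C₀ for a constant C₀ > 0, and set v = ψ·w. Then v generates a piecewise smooth flow on P(3), and its time-1 map f₁ : P(3) → P(3) satisfies, with C₁ = e^{C₀+2} > 1: (1) f₁ restricts to the identity on ∂_ver P(3); (2) f₁ is a C₁-bi-Lipschitz homeomorphism; (3) f₁(G) = G'; (4) f₁(P(1/(100C₁n))) ⊆ N^hor_{1/(100n)}(G'). -/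
noncomputable section

/-- The horizontal vector field `w` on `P(3)` (depending on the positive integer `n`). -/
noncomputable def wField (n : ℕ) (p : R3) : R3 :=
  if |p 0 + p 1| ≤ 1 / (10 * (n : ℝ)) then
    mk3 (p 0 + p 1) (-(p 0 + p 1)) 0
  else
    mk3 (1 / (10 * (n : ℝ)) * Real.sign (p 0 + p 1))
        (-(1 / (10 * (n : ℝ)) * Real.sign (p 0 + p 1))) 0

open Set Metric

section FlowGlobal
variable {E : Type*} [NormedAddCommGroup E] [NormedSpace ℝ E] [CompleteSpace E]

theorem exists_global_flow {V : E → E} {K : NNReal} {M : ℝ}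
    (hlip : LipschitzWith K V) (hM : ∀ x, ‖V x‖ ≤ M) :
    ∃ φ : ℝ → E → E, (∀ p, φ 0 p = p) ∧
      ∀ p t, HasDerivAt (fun s => φ s p) (V (φ t p)) t := by
  have hM0 : 0 ≤ M := le_trans (norm_nonneg _) (hM 0)
  have H : ∀ (p : E) (k : ℕ), ∃ f : ℝ → E, f 0 = p ∧
      ∀ t ∈ Icc (-(k+1:ℝ)) (k+1), HasDerivWithinAt f (V (f t)) (Icc (-(k+1:ℝ)) (k+1)) t := by
    intro p k
    have hk1 : (0:ℝ) ≤ (k:ℝ) + 1 := by positivity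
    have hpl : IsPicardLindelof (fun _ x => V x) (tmin := -(k+1:ℝ)) (tmax := k+1)
        ⟨0, ⟨by linarith, by linarith⟩⟩ p (M*(k+1)).toNNReal 0 M.toNNReal K :=
      IsPicardLindelof.of_time_independent (fun x _ => by rw [Real.coe_toNNReal _ hM0]; exact hM x)
        hlip.lipschitzOnWith
        (by rw [Real.coe_toNNReal _ hM0, Real.coe_toNNReal _ (by positivity)]; simp)
    exact hpl.exists_eq_forall_mem_Icc_hasDerivWithinAt₀
  choose sol h0 hderiv using H
  have hDA : ∀ (p : E) (k : ℕ), ∀ t ∈ Ioo (-(k+1:ℝ)) (k+1), HasDerivAt (sol p k) (V (sol p k t)) t :=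
    fun p k t ht => (hderiv p k t (Ioo_subset_Icc_self ht)).hasDerivAt (Icc_mem_nhds ht.1 ht.2)
  have hcont : ∀ (p : E) (k : ℕ), ContinuousOn (sol p k) (Icc (-(k+1:ℝ)) (k+1)) :=
    fun p k t ht => (hderiv p k t ht).continuousWithinAt
  have hzero : ∀ (k : ℕ), (0:ℝ) ∈ Ioo (-(k+1:ℝ)) (k+1) := by
    intro k
    have hk1 : (0:ℝ) < (k:ℝ) + 1 := by positivity
    exact ⟨by linarith, hk1⟩
  have hco : ∀ (p : E) (k m : ℕ), k ≤ m → ∀ t ∈ Icc (-(k+1:ℝ)) (k+1), sol p k t = sol p m t := by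
    intro p k m hkm
    have hkm' : ((k:ℝ)+1) ≤ (m:ℝ)+1 := by exact_mod_cast by omega
    have hsub : Icc (-(k+1:ℝ)) (k+1) ⊆ Icc (-(m+1:ℝ)) (m+1) := Icc_subset_Icc (by linarith) hkm'
    have hsub' : Ioo (-(k+1:ℝ)) (k+1) ⊆ Ioo (-(m+1:ℝ)) (m+1) := Ioo_subset_Ioo (by linarith) hkm'
    exact ODE_solution_unique_of_mem_Icc (v := fun _ x => V x) (s := fun _ => univ)
      (fun t _ => hlip.lipschitzOnWith) (hzero k)
      (hcont p k) (fun t ht => hDA p k t ht) (fun _ _ => trivial)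
      ((hcont p m).mono hsub) (fun t ht => hDA p m t (hsub' ht)) (fun _ _ => trivial)
      ((h0 p k).trans (h0 p m).symm)
  have hmem : ∀ t : ℝ, t ∈ Icc (-((⌈|t|⌉₊:ℝ)+1)) ((⌈|t|⌉₊:ℝ)+1) := by
    intro t
    have h1 : |t| ≤ (⌈|t|⌉₊:ℝ) := Nat.le_ceil _
    have h2 := abs_le.1 (le_trans h1 (by linarith : (⌈|t|⌉₊:ℝ) ≤ (⌈|t|⌉₊:ℝ)+1))
    exact h2
  refine ⟨fun t p => sol p ⌈|t|⌉₊ t, ?_, ?_⟩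
  · intro p
    simpa using h0 p 0
  · intro p t
    set k := ⌈|t|⌉₊ + 1 with hk
    have habs : |t| < (k:ℝ) := by
      push_cast [hk]
      have := Nat.le_ceil |t|
      linarith
    have ht' : t ∈ Ioo (-(k+1:ℝ)) (k+1) := by
      have := abs_lt.1 habs
      constructor <;> [linarith; linarith]
    have key : ∀ s : ℝ, |s| < |t| + 1 → sol p ⌈|s|⌉₊ s = sol p k s := by
      intro s hs
      have h1 : ⌈|s|⌉₊ ≤ k := by
        apply Nat.ceil_le.2
        push_cast [hk]
        have := Nat.le_ceil |t|
        linarith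
      exact hco p ⌈|s|⌉₊ k h1 s (hmem s)
    show HasDerivAt (fun s => sol p ⌈|s|⌉₊ s) (V (sol p ⌈|t|⌉₊ t)) t
    have e1 : sol p ⌈|t|⌉₊ t = sol p k t := key t (by linarith [abs_nonneg t])
    rw [e1]
    refine HasDerivAt.congr_of_eventuallyEq (hDA p k t ht') ?_
    filter_upwards [Metric.ball_mem_nhds t one_pos] with s hs
    have : |s| < |t| + 1 := by
      have h3 : |s - t| < 1 := by simpa [Real.dist_eq] using hs
      calc |s| = |t + (s - t)| := by ring_nf
        _ ≤ |t| + |s - t| := abs_add_le _ _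
        _ < |t| + 1 := by linarith
    exact key s this

end FlowGlobal

section R3Lemmas

lemma R3_ext {p q : R3} (h0 : p 0 = q 0) (h1 : p 1 = q 1) (h2 : p 2 = q 2) : p = q := by
  ext i; fin_cases i <;> assumption

lemma dist_sq_R3 (p q : R3) :
    dist p q ^ 2 = (p 0 - q 0)^2 + (p 1 - q 1)^2 + (p 2 - q 2)^2 := by
  rw [EuclideanSpace.dist_eq, Real.sq_sqrt (by positivity)]
  simp [Fin.sum_univ_three, Real.dist_eq, sq_abs]

lemma coord_dist_le (p q : R3) (i : Fin 3) : |p i - q i| ≤ dist p q := by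
  have h := dist_sq_R3 p q
  have key : ∀ x : ℝ, x^2 ≤ dist p q ^ 2 → |x| ≤ dist p q := by
    intro x hx
    calc |x| = Real.sqrt (x^2) := (Real.sqrt_sq_eq_abs _).symm
      _ ≤ Real.sqrt (dist p q ^ 2) := Real.sqrt_le_sqrt hx
      _ = dist p q := by rw [Real.sqrt_sq dist_nonneg]
  fin_cases i
  · exact key (p 0 - q 0) (by nlinarith [sq_nonneg (p 1 - q 1), sq_nonneg (p 2 - q 2)])
  · exact key (p 1 - q 1) (by nlinarith [sq_nonneg (p 0 - q 0), sq_nonneg (p 2 - q 2)])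
  · exact key (p 2 - q 2) (by nlinarith [sq_nonneg (p 0 - q 0), sq_nonneg (p 1 - q 1)])

@[simp] lemma mk3_c0 (a b c : ℝ) : mk3 a b c 0 = a := rfl
@[simp] lemma mk3_c1 (a b c : ℝ) : mk3 a b c 1 = b := rfl
@[simp] lemma mk3_c2 (a b c : ℝ) : mk3 a b c 2 = c := rfl

/-- The direction vector `(1, -1, 0)`. -/
noncomputable def eVec : R3 := mk3 1 (-1) 0

@[simp] lemma smul_coord (a : ℝ) (q : R3) (i : Fin 3) : (a • q) i = a * q i := rfl
@[simp] lemma add_coord (p q : R3) (i : Fin 3) : (p + q) i = p i + q i := rfl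

@[simp] lemma eVec0 : eVec 0 = 1 := rfl
@[simp] lemma eVec1 : eVec 1 = -1 := rfl
@[simp] lemma eVec2 : eVec 2 = 0 := rfl

lemma norm_eVec : ‖eVec‖ = Real.sqrt 2 := by
  have h : ‖eVec‖^2 = 2 := by
    rw [show ‖eVec‖ = dist eVec 0 by simp [dist_eq_norm], dist_sq_R3]
    have h0 : (0:R3) 0 = 0 := rfl
    have h1 : (0:R3) 1 = 0 := rfl
    have h2 : (0:R3) 2 = 0 := rfl
    rw [h0, h1, h2, eVec0, eVec1, eVec2]
    norm_num
  rw [← h, Real.sqrt_sq (norm_nonneg _)]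

lemma smul_add_coord (p : R3) (a : ℝ) (i : Fin 3) : (p + a • eVec) i = p i + a * eVec i := rfl

end R3Lemmas

section Clip

/-- clip to `[-c, c]` -/
noncomputable def clip (c s : ℝ) : ℝ := max (-c) (min c s)

lemma clip_lipschitz (c x y : ℝ) : |clip c x - clip c y| ≤ |x - y| := by
  unfold clip
  refine le_trans (abs_max_sub_max_le_max _ _ _ _) ?_
  simp only [sub_self, abs_zero]
  refine max_le (abs_nonneg _) ?_
  refine le_trans (abs_min_sub_min_le_max _ _ _ _) ?_
  simp [abs_nonneg]

lemma abs_clip_le (c s : ℝ) (hc : 0 ≤ c) : |clip c s| ≤ c := by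
  unfold clip
  rw [abs_le]
  constructor
  · exact le_max_left _ _
  · exact max_le (by linarith) (min_le_left _ _)

lemma clip_of_abs_le {c s : ℝ} (h : |s| ≤ c) : clip c s = s := by
  rcases abs_le.1 h with ⟨h1, h2⟩
  unfold clip
  rw [min_eq_right h2, max_eq_right h1]

lemma wField_eq (n : ℕ) (hn : 0 < n) (p : R3) :
    wField n p = clip (1/(10*(n:ℝ))) (p 0 + p 1) • eVec := by
  have hc : 0 < 1/(10*(n:ℝ)) := by positivity
  set c := 1/(10*(n:ℝ)) with hcdef
  set s := p 0 + p 1 with hsdef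
  unfold wField
  rw [← hcdef, ← hsdef]
  split_ifs with h
  · rw [clip_of_abs_le h]
    exact R3_ext (by simp) (by simp) (by simp)
  · push_neg at h
    rcases lt_or_ge 0 s with hs | hs
    · have : Real.sign s = 1 := Real.sign_of_pos hs
      rw [this]
      have hcs : clip c s = c := by
        unfold clip
        rw [min_eq_left (by rw [abs_of_pos hs] at h; linarith), max_eq_right (by linarith)]
      rw [hcs]
      exact R3_ext (by simp) (by simp) (by simp)
    · have hs' : s < 0 := by
        rcases lt_or_eq_of_le hs with h' | h'
        · exact h'
        · exfalso; rw [h'] at h; simp at h; linarith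
      have : Real.sign s = -1 := Real.sign_of_neg hs'
      rw [this]
      have hcs : clip c s = -c := by
        unfold clip
        rw [min_eq_right (by rw [abs_of_neg hs'] at h; linarith), max_eq_left (by rw [abs_of_neg hs'] at h; linarith)]
      rw [hcs]
      exact R3_ext (by simp) (by simp) (by simp)

end Clip
section PsetLemmas

lemma Pset_mono {r r' : ℝ} (hr : 0 ≤ r) (hrr : r ≤ r') : Pset r ⊆ Pset r' := by
  intro p hp
  have h2 : r^2 ≤ r'^2 := by nlinarith
  rcases hp with ⟨h, hz⟩ | ⟨h, hz⟩ | ⟨h, hz⟩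
  · exact Or.inl ⟨le_trans h h2, hz⟩
  · exact Or.inr (Or.inl ⟨le_trans h h2, hz⟩)
  · exact Or.inr (Or.inr ⟨le_trans h h2, hz⟩)

lemma Pset_z {r : ℝ} {p : R3} (hp : p ∈ Pset r) : -8 ≤ p 2 ∧ p 2 ≤ 8 := by
  rcases hp with ⟨_, hz1, hz2⟩ | ⟨_, hz1, hz2⟩ | ⟨_, hz1, hz2⟩ <;>
    constructor <;> linarith

lemma disk_pert {a b a' b' : ℝ} (h : a^2 + b^2 ≤ (5/2:ℝ)^2)
    (ha : |a' - a| ≤ 3/16) (hb : |b' - b| ≤ 3/16) : a'^2 + b'^2 ≤ 3^2 := by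
  rcases abs_le.1 ha with ⟨ha1, ha2⟩
  rcases abs_le.1 hb with ⟨hb1, hb2⟩
  nlinarith [sq_nonneg (a - 4*(a'-a)), sq_nonneg (b - 4*(b'-b)), sq_nonneg (a'-a), sq_nonneg (b'-b)]

lemma mem_interior_P3 {p : R3} (hp : p ∈ Pset (5/2)) (hlo : -8 < p 2) (hhi : p 2 < 8) :
    p ∈ interior (Pset 3) := by
  set δ := min (1/16 : ℝ) (min (8 - p 2) (p 2 + 8)) with hδdef
  have hδ : 0 < δ :=
    lt_min (by norm_num) (lt_min (by linarith) (by linarith))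
  have hδ8 : δ ≤ 1/16 := min_le_left _ _
  have hδa : δ ≤ 8 - p 2 := le_trans (min_le_right _ _) (min_le_left _ _)
  have hδb : δ ≤ p 2 + 8 := le_trans (min_le_right _ _) (min_le_right _ _)
  refine mem_interior.2 ⟨Metric.ball p δ, ?_, Metric.isOpen_ball, Metric.mem_ball_self hδ⟩
  intro q hq
  have hd : dist q p < δ := Metric.mem_ball.1 hq
  have d0 := abs_lt.1 (lt_of_le_of_lt (coord_dist_le q p 0) hd)
  have d1 := abs_lt.1 (lt_of_le_of_lt (coord_dist_le q p 1) hd)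
  have d2 := abs_lt.1 (lt_of_le_of_lt (coord_dist_le q p 2) hd)
  rcases le_or_gt 0 (q 2) with hq2 | hq2
  · -- q lies in the top cylinder
    refine Or.inl ⟨?_, hq2, by linarith [d2.1, d2.2]⟩
    rcases le_or_gt 0 (p 2) with hp2 | hp2
    · have base : p 0^2 + p 1^2 ≤ (5/2:ℝ)^2 := by
        rcases hp with ⟨h, _⟩ | ⟨h, _, hz'⟩ | ⟨h, _, hz'⟩
        · exact h
        · have hz0 : p 2 = 0 := le_antisymm hz' hp2
          rw [hz0] at h; simpa using h
        · have hz0 : p 2 = 0 := le_antisymm hz' hp2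
          rw [hz0] at h; simpa using h
      exact disk_pert base (by rw [abs_le]; constructor <;> linarith)
        (by rw [abs_le]; constructor <;> linarith)
    · -- p 2 < 0 but q 2 ≥ 0, so |p 2| < δ
      have hp2' : -p 2 < δ := by linarith [d2.2]
      have base2 : p 0^2 + (p 1 + p 2)^2 ≤ (5/2:ℝ)^2 ∨ p 0^2 + (p 1 - p 2)^2 ≤ (5/2:ℝ)^2 := by
        rcases hp with ⟨h, hz, _⟩ | ⟨h, _, _⟩ | ⟨h, _, _⟩
        · exact absurd hz (by linarith)
        · exact Or.inl h
        · exact Or.inr h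
      rcases base2 with h | h
      · exact disk_pert h (by rw [abs_le]; constructor <;> linarith)
          (by rw [abs_le]; constructor <;> linarith)
      · exact disk_pert h (by rw [abs_le]; constructor <;> linarith)
          (by rw [abs_le]; constructor <;> linarith)
  · -- q lies in the lower part
    have hq2lo : -8 ≤ q 2 := by linarith [d2.1]
    rcases le_or_gt (p 2) 0 with hp2 | hp2
    · have base2 : p 0^2 + (p 1 + p 2)^2 ≤ (5/2:ℝ)^2 ∨ p 0^2 + (p 1 - p 2)^2 ≤ (5/2:ℝ)^2 := by
        rcases hp with ⟨h, hz, _⟩ | ⟨h, _, _⟩ | ⟨h, _, _⟩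
        · have hz0 : p 2 = 0 := le_antisymm hp2 hz
          refine Or.inl ?_
          rw [hz0]; simpa using h
        · exact Or.inl h
        · exact Or.inr h
      rcases base2 with h | h
      · exact Or.inr (Or.inl ⟨disk_pert h (by rw [abs_le]; constructor <;> linarith)
          (by rw [abs_le]; constructor <;> linarith), hq2lo, le_of_lt hq2⟩)
      · exact Or.inr (Or.inr ⟨disk_pert h (by rw [abs_le]; constructor <;> linarith)
          (by rw [abs_le]; constructor <;> linarith), hq2lo, le_of_lt hq2⟩)
    · -- p 2 > 0 but q 2 < 0, so p 2 < δ
      have hp2' : p 2 < δ := by linarith [d2.1]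
      have base : p 0^2 + p 1^2 ≤ (5/2:ℝ)^2 := by
        rcases hp with ⟨h, _⟩ | ⟨h, _, hz'⟩ | ⟨h, _, hz'⟩
        · exact h
        · exact absurd hz' (by linarith)
        · exact absurd hz' (by linarith)
      refine Or.inr (Or.inl ⟨disk_pert base (by rw [abs_le]; constructor <;> linarith)
        (by rw [abs_le]; constructor <;> linarith), hq2lo, le_of_lt hq2⟩)

lemma isClosed_P3 : IsClosed (Pset 3) := by
  have c0 : Continuous (fun p : R3 => p 0) := (EuclideanSpace.proj (0 : Fin 3)).continuous
  have c1 : Continuous (fun p : R3 => p 1) := (EuclideanSpace.proj (1 : Fin 3)).continuous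
  have c2 : Continuous (fun p : R3 => p 2) := (EuclideanSpace.proj (2 : Fin 3)).continuous
  have h1 : IsClosed {p : R3 | (p 0)^2 + (p 1)^2 ≤ (3:ℝ)^2 ∧ 0 ≤ p 2 ∧ p 2 ≤ 8} := by
    rw [Set.setOf_and, Set.setOf_and]
    exact (isClosed_le ((c0.pow 2).add (c1.pow 2)) continuous_const).inter
      ((isClosed_le continuous_const c2).inter (isClosed_le c2 continuous_const))
  have h2 : IsClosed {p : R3 | (p 0)^2 + (p 1 + p 2)^2 ≤ (3:ℝ)^2 ∧ -8 ≤ p 2 ∧ p 2 ≤ 0} := by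
    rw [Set.setOf_and, Set.setOf_and]
    exact (isClosed_le ((c0.pow 2).add ((c1.add c2).pow 2)) continuous_const).inter
      ((isClosed_le continuous_const c2).inter (isClosed_le c2 continuous_const))
  have h3 : IsClosed {p : R3 | (p 0)^2 + (p 1 - p 2)^2 ≤ (3:ℝ)^2 ∧ -8 ≤ p 2 ∧ p 2 ≤ 0} := by
    rw [Set.setOf_and, Set.setOf_and]
    exact (isClosed_le ((c0.pow 2).add ((c1.sub c2).pow 2)) continuous_const).inter
      ((isClosed_le continuous_const c2).inter (isClosed_le c2 continuous_const))
  exact (h1.union (h2.union h3))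

lemma verBoundary_shell : verBoundary ⊆ Pset 3 \ Pset (5/2) := by
  intro p hp
  obtain ⟨hfr, hD⟩ := hp
  have hP3 : p ∈ Pset 3 := isClosed_P3.frontier_subset hfr
  refine ⟨hP3, ?_⟩
  intro h52
  have hz := Pset_z hP3
  rcases eq_or_lt_of_le hz.2 with h8 | h8
  · -- p 2 = 8 : p is in D1int
    have : p 0^2 + p 1^2 ≤ (5/2:ℝ)^2 := by
      rcases h52 with ⟨h, _⟩ | ⟨_, _, hz'⟩ | ⟨_, _, hz'⟩
      · exact h
      · linarith
      · linarith
    exact hD (Or.inl (Or.inl ⟨h8, by nlinarith⟩))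
  rcases eq_or_lt_of_le hz.1 with h8' | h8'
  · -- p 2 = -8
    rcases h52 with ⟨_, hz', _⟩ | ⟨h, _, _⟩ | ⟨h, _, _⟩
    · linarith
    · refine hD (Or.inl (Or.inr ⟨h8'.symm, ?_⟩))
      have : p 1 + p 2 = p 1 - 8 := by rw [← h8']; ring
      rw [this] at h; nlinarith
    · refine hD (Or.inr ⟨h8'.symm, ?_⟩)
      have : p 1 - p 2 = p 1 + 8 := by rw [← h8']; ring
      rw [this] at h; nlinarith
  · -- interior point: contradiction with frontier
    have hint : p ∈ interior (Pset 3) := mem_interior_P3 h52 h8' h8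
    rw [frontier, Set.mem_diff] at hfr
    exact hfr.2 hint

end PsetLemmas
section GraphLemmas

lemma Ggraph_sub_P0 : Ggraph ⊆ Pset 0 := by
  intro p hp
  rcases hp with ⟨h0, h1, hz⟩ | ⟨ε, hε, h0, h1, hz1, hz2⟩
  · exact Or.inl ⟨by rw [h0, h1]; norm_num, hz⟩
  · rcases hε with hε | hε
    · refine Or.inr (Or.inr ⟨?_, hz1, hz2⟩)
      rw [h0, h1, hε]; ring_nf; norm_num
    · refine Or.inr (Or.inl ⟨?_, hz1, hz2⟩)
      rw [h0, h1, hε]; ring_nf; norm_num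

lemma near_axis {r : ℝ} {p : R3} (hp : p ∈ Pset r) :
    ∃ q ∈ Ggraph, q 2 = p 2 ∧ (p 0 - q 0)^2 + (p 1 - q 1)^2 ≤ r^2 := by
  rcases hp with ⟨h, hz1, hz2⟩ | ⟨h, hz1, hz2⟩ | ⟨h, hz1, hz2⟩
  · refine ⟨mk3 0 0 (p 2), Or.inl ⟨rfl, rfl, hz1, hz2⟩, rfl, ?_⟩
    simpa using h
  · refine ⟨mk3 0 (-(p 2)) (p 2), Or.inr ⟨-1, Or.inr rfl, rfl, by simp, hz1, hz2⟩,
      rfl, ?_⟩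
    simp only [mk3_c0, mk3_c1]
    calc (p 0 - 0)^2 + (p 1 - -(p 2))^2 = p 0^2 + (p 1 + p 2)^2 := by ring
      _ ≤ r^2 := h
  · refine ⟨mk3 0 (p 2) (p 2), Or.inr ⟨1, Or.inl rfl, rfl, by simp, hz1, hz2⟩,
      rfl, ?_⟩
    simp only [mk3_c0, mk3_c1]
    calc (p 0 - 0)^2 + (p 1 - p 2)^2 = p 0^2 + (p 1 - p 2)^2 := by ring
      _ ≤ r^2 := h

end GraphLemmas
set_option maxHeartbeats 2000000 in
/-- Lemma `elementary`.
Fix a positive integer `n`.  Let `ψ` be a smooth function with values in `[0,1]`, `ψ ≡ 1`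
on `P(2)`, `ψ ≡ 0` on `P(3)∖P(5/2)` and `‖∇ψ‖ ≤ C₀`, and let `v = ψ·w`.  Then `v`
generates a (piecewise smooth) flow `φ` on `P(3)` whose time-1 map `f₁ = φ 1` satisfies,
with `C₁ = e^{C₀+2} > 1`:
(1) `f₁` is the identity on `∂_ver P(3)`;
(2) `f₁ : P(3) → P(3)` is a `C₁`-bi-Lipschitz homeomorphism;
(3) `f₁(G) = G'`;
(4) `f₁(P(1/(100C₁n))) ⊆ N^hor_{1/(100n)}(G')`. -/
theorem flow_time_one_map_props (n : ℕ) (hn : 0 < n)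
    (ψ : R3 → ℝ) (C₀ : ℝ) (hC₀ : 0 < C₀)
    (hψsmooth : ContDiff ℝ (⊤ : ℕ∞) ψ)
    (hψ01 : ∀ p : R3, ψ p ∈ Set.Icc (0 : ℝ) 1)
    (hψone : ∀ p ∈ Pset 2, ψ p = 1)
    (hψzero : ∀ p ∈ Pset 3 \ Pset (5/2), ψ p = 0)
    (hψgrad : ∀ p : R3, ‖fderiv ℝ ψ p‖ ≤ C₀) :
    ∃ φ : ℝ → R3 → R3,
      -- `φ` is the flow of the vector field `v = ψ • w`
      (∀ p : R3, φ 0 p = p) ∧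
      (∀ (p : R3) (t : ℝ), HasDerivAt (fun s => φ s p) (ψ (φ t p) • wField n (φ t p)) t) ∧
      (∀ p ∈ Pset 3, ∀ t : ℝ, φ t p ∈ Pset 3) ∧
      -- properties of the time-1 map `f₁ = φ 1`, with `C₁ = e^{C₀+2}`
      (∀ p ∈ verBoundary, φ 1 p = p) ∧
      Set.BijOn (φ 1) (Pset 3) (Pset 3) ∧
      (∀ u ∈ Pset 3, ∀ v ∈ Pset 3,
        dist (φ 1 u) (φ 1 v) ≤ Real.exp (C₀ + 2) * dist u v) ∧
      (∀ u ∈ Pset 3, ∀ v ∈ Pset 3,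
        dist u v ≤ Real.exp (C₀ + 2) * dist (φ 1 u) (φ 1 v)) ∧
      (φ 1) '' Ggraph = Ggraph' n ∧
      (φ 1) '' (Pset (1 / (100 * Real.exp (C₀ + 2) * (n : ℝ)))) ⊆
        Nhor (1 / (100 * (n : ℝ))) (Ggraph' n) := by
  have hn1 : (1:ℝ) ≤ (n:ℝ) := by exact_mod_cast hn
  set c : ℝ := 1 / (10 * (n:ℝ)) with hc_def
  have hc0 : 0 < c := by rw [hc_def]; positivity
  have hc10 : c ≤ 1/10 := by
    rw [hc_def, div_le_div_iff₀ (by positivity) (by norm_num)]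
    linarith
  set V : R3 → R3 := fun p => ψ p • wField n p with hV_def
  have hVe : ∀ p, V p = (ψ p * clip c (p 0 + p 1)) • eVec := by
    intro p
    show ψ p • wField n p = _
    rw [wField_eq n hn p, smul_smul, ← hc_def]
  have sqrt2_nonneg : (0:ℝ) ≤ Real.sqrt 2 := Real.sqrt_nonneg 2
  have sqrt2_le : Real.sqrt 2 ≤ 1.5 := by
    have h1 : Real.sqrt 2 ^ 2 = 2 := Real.sq_sqrt (by norm_num)
    nlinarith [Real.sqrt_nonneg 2]
  have hs2 : Real.sqrt 2 * Real.sqrt 2 = 2 := Real.mul_self_sqrt (by norm_num)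
  -- ψ is Lipschitz
  have hψlip : ∀ a b : R3, |ψ a - ψ b| ≤ C₀ * dist a b := by
    intro a b
    have hL : LipschitzWith C₀.toNNReal ψ := by
      apply lipschitzWith_of_nnnorm_fderiv_le (hψsmooth.differentiable (by simp))
      intro x
      rw [← NNReal.coe_le_coe, coe_nnnorm, Real.coe_toNNReal _ hC₀.le]
      exact hψgrad x
    have h := hL.dist_le_mul a b
    rwa [Real.dist_eq, Real.coe_toNNReal _ hC₀.le] at h
  have hψ_abs : ∀ p : R3, |ψ p| ≤ 1 := by
    intro p
    rcases hψ01 p with ⟨h1, h2⟩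
    rw [abs_of_nonneg h1]; exact h2
  -- V is Lipschitz with constant C₀ + 2
  set K : NNReal := (C₀ + 2).toNNReal with hK_def
  have hK : (K : ℝ) = C₀ + 2 := Real.coe_toNNReal _ (by linarith)
  have hVdiff : ∀ a b : R3, ‖V a - V b‖ ≤ (C₀ + 2) * dist a b := by
    intro a b
    rw [hVe a, hVe b, ← sub_smul, norm_smul, Real.norm_eq_abs, norm_eVec]
    have key : |ψ a * clip c (a 0 + a 1) - ψ b * clip c (b 0 + b 1)| ≤
        |clip c (a 0 + a 1) - clip c (b 0 + b 1)| + c * (C₀ * dist a b) := by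
      have e1 : ψ a * clip c (a 0 + a 1) - ψ b * clip c (b 0 + b 1)
          = ψ a * (clip c (a 0 + a 1) - clip c (b 0 + b 1)) + clip c (b 0 + b 1) * (ψ a - ψ b) := by
        ring
      rw [e1]
      refine le_trans (abs_add_le _ _) ?_
      rw [abs_mul, abs_mul]
      have h1 : |ψ a| * |clip c (a 0 + a 1) - clip c (b 0 + b 1)| ≤
          1 * |clip c (a 0 + a 1) - clip c (b 0 + b 1)| :=
        mul_le_mul_of_nonneg_right (hψ_abs a) (abs_nonneg _)
      have h2 : |clip c (b 0 + b 1)| * |ψ a - ψ b| ≤ c * (C₀ * dist a b) :=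
        mul_le_mul (abs_clip_le c _ hc0.le) (hψlip a b) (abs_nonneg _) hc0.le
      linarith
    have hgab : |clip c (a 0 + a 1) - clip c (b 0 + b 1)| ≤ |(a 0 + a 1) - (b 0 + b 1)| :=
      clip_lipschitz c _ _
    have hsab : |(a 0 + a 1) - (b 0 + b 1)| ≤ Real.sqrt 2 * dist a b := by
      have h2 : ((a 0 + a 1) - (b 0 + b 1))^2 ≤ 2 * dist a b ^ 2 := by
        have hd := dist_sq_R3 a b
        nlinarith [sq_nonneg ((a 0 - b 0) - (a 1 - b 1)), sq_nonneg (a 2 - b 2)]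
      calc |(a 0 + a 1) - (b 0 + b 1)| = Real.sqrt (((a 0 + a 1) - (b 0 + b 1))^2) :=
            (Real.sqrt_sq_eq_abs _).symm
        _ ≤ Real.sqrt (2 * dist a b ^2) := Real.sqrt_le_sqrt h2
        _ = Real.sqrt 2 * dist a b := by
            rw [Real.sqrt_mul (by norm_num) (dist a b ^ 2), Real.sqrt_sq dist_nonneg]
    have hd0 : (0:ℝ) ≤ dist a b := dist_nonneg
    have hx : |ψ a * clip c (a 0 + a 1) - ψ b * clip c (b 0 + b 1)| ≤
        Real.sqrt 2 * dist a b + c * (C₀ * dist a b) := by linarith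
    have step1 := mul_le_mul_of_nonneg_right hx sqrt2_nonneg
    have step2 : (Real.sqrt 2 * dist a b + c * (C₀ * dist a b)) * Real.sqrt 2
        = Real.sqrt 2 * Real.sqrt 2 * dist a b + (Real.sqrt 2 * c) * (C₀ * dist a b) := by ring
    rw [step2, hs2] at step1
    have step3 : Real.sqrt 2 * c ≤ 1 := by nlinarith
    have step4 : (Real.sqrt 2 * c) * (C₀ * dist a b) ≤ 1 * (C₀ * dist a b) :=
      mul_le_mul_of_nonneg_right step3 (by positivity)
    nlinarith
  have hVlip : LipschitzWith K V :=
    LipschitzWith.of_dist_le_mul (fun a b => by rw [dist_eq_norm, hK]; exact hVdiff a b)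
  have hVbound : ∀ q : R3, ‖V q‖ ≤ 1 := by
    intro q
    rw [hVe q, norm_smul, Real.norm_eq_abs, norm_eVec]
    have h1 : |ψ q * clip c (q 0 + q 1)| ≤ c := by
      rw [abs_mul]
      calc |ψ q| * |clip c (q 0 + q 1)| ≤ 1 * c :=
        mul_le_mul (hψ_abs q) (abs_clip_le c _ hc0.le) (abs_nonneg _) (by norm_num)
        _ = c := one_mul c
    nlinarith [abs_nonneg (ψ q * clip c (q 0 + q 1))]
  -- the global flow
  obtain ⟨φ, hφ0, hφ'⟩ := exists_global_flow hVlip hVbound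
  have hφcont : ∀ p : R3, Continuous (fun t => φ t p) :=
    fun p => continuous_iff_continuousAt.2 (fun t => (hφ' p t).continuousAt)
  -- uniqueness of solutions
  have uniqIcc : ∀ (p : R3) (γ : ℝ → R3) (a b : ℝ), a < 0 → 0 < b →
      (∀ t ∈ Set.Ioo a b, HasDerivAt γ (V (γ t)) t) → ContinuousOn γ (Set.Icc a b) →
      γ 0 = p → ∀ t ∈ Set.Icc a b, γ t = φ t p := by
    intro p γ a b ha hb hd hc h0 t ht
    exact ODE_solution_unique_of_mem_Icc (v := fun _ x => V x) (s := fun _ => Set.univ)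
      (fun t _ => hVlip.lipschitzOnWith) ⟨ha, hb⟩ hc hd (fun _ _ => trivial)
      ((hφcont p).continuousOn) (fun t _ => hφ' p t) (fun _ _ => trivial)
      (h0.trans (hφ0 p).symm) ht
  have uniqAll : ∀ (p : R3) (γ : ℝ → R3), (∀ t, HasDerivAt γ (V (γ t)) t) → γ 0 = p →
      ∀ t, γ t = φ t p := by
    intro p γ hd h0 t
    have ht : t ∈ Set.Icc (-(|t|+1)) (|t|+1) := by
      constructor <;> [linarith [neg_abs_le t]; linarith [le_abs_self t]]
    exact uniqIcc p γ (-(|t|+1)) (|t|+1) (by linarith [abs_nonneg t]) (by positivity)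
      (fun t _ => hd t)
      (Continuous.continuousOn (continuous_iff_continuousAt.2 (fun s => (hd s).continuousAt)))
      h0 t ht
  have stationary : ∀ q : R3, V q = 0 → ∀ t, φ t q = q := by
    intro q hVq t
    exact (uniqAll q (fun _ => q) (fun t => by simpa [hVq] using hasDerivAt_const t q) rfl t).symm
  have group : ∀ (s : ℝ) (p : R3) (t : ℝ), φ (t + s) p = φ t (φ s p) := by
    intro s p t
    refine uniqAll (φ s p) (fun r => φ (r + s) p) ?_ (by show φ (0 + s) p = φ s p; rw [zero_add]) t
    intro r
    have h2 : HasDerivAt (fun u : ℝ => u + s) 1 r := (hasDerivAt_id r).add_const s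
    have h3 := (hφ' p (r + s)).scomp r h2
    rw [one_smul] at h3; exact h3
  have inv1 : ∀ p : R3, φ (-1) (φ 1 p) = p := by
    intro p
    have h := group 1 p (-1)
    rw [show (-1:ℝ) + 1 = 0 by ring, hφ0] at h
    exact h.symm
  have inv2 : ∀ q : R3, φ 1 (φ (-1) q) = q := by
    intro q
    have h := group (-1) q 1
    rw [show (1:ℝ) + -1 = 0 by ring, hφ0] at h
    exact h.symm
  -- the third coordinate is constant along the flow
  have zconst : ∀ (p : R3) (t : ℝ), φ t p 2 = p 2 := by
    intro p t
    have hd : ∀ s : ℝ, HasDerivAt (fun τ => φ τ p 2) 0 s := by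
      intro s
      have h1' := (EuclideanSpace.proj (2 : Fin 3)).hasFDerivAt.comp_hasDerivAt s (hφ' p s)
      have h1 : HasDerivAt (fun τ => φ τ p 2) (V (φ s p) 2) s := h1' 
      have h2 : V (φ s p) 2 = 0 := by rw [hVe]; simp
      rwa [h2] at h1
    have h := is_const_of_deriv_eq_zero (fun s => (hd s).differentiableAt)
      (fun s => (hd s).deriv) t 0
    simpa [hφ0] using h
  -- Gronwall estimates
  have grw : ∀ u w : R3, dist (φ 1 u) (φ 1 w) ≤ Real.exp (C₀ + 2) * dist u w := by
    intro u w
    have h := dist_le_of_trajectories_ODE (v := fun _ x => V x) (K := K)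
      (fun _ => hVlip)
      (f := fun s => φ s u) (g := fun s => φ s w) (a := 0) (b := 1) (δ := dist u w)
      ((hφcont u).continuousOn) (fun t _ => (hφ' u t).hasDerivWithinAt)
      ((hφcont w).continuousOn) (fun t _ => (hφ' w t).hasDerivWithinAt)
      (by show dist (φ 0 u) (φ 0 w) ≤ dist u w; rw [hφ0, hφ0])
    have h1 : dist (φ 1 u) (φ 1 w) ≤ dist u w * Real.exp ((K:ℝ) * (1 - 0)) :=
      h 1 ⟨by norm_num, le_refl 1⟩
    rw [show ((K:ℝ) * (1 - 0)) = C₀ + 2 by rw [hK]; ring] at h1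
    linarith [h1]
  have grwRev : ∀ u w : R3, dist u w ≤ Real.exp (C₀ + 2) * dist (φ 1 u) (φ 1 w) := by
    intro u w
    have hlipneg : LipschitzWith K (fun x : R3 => -(V x)) :=
      LipschitzWith.of_dist_le_mul (fun a b => by
        rw [dist_neg_neg]; exact hVlip.dist_le_mul a b)
    have hder : ∀ (r : R3) (s : ℝ), HasDerivAt (fun τ => φ (1 - τ) r) (-(V (φ (1 - s) r))) s := by
      intro r s
      have h2 : HasDerivAt (fun τ : ℝ => 1 - τ) (-1) s := (hasDerivAt_id s).const_sub 1
      have h3 := (hφ' r (1 - s)).scomp s h2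
      rw [neg_one_smul] at h3; exact h3
    have h := dist_le_of_trajectories_ODE (v := fun _ x => -(V x)) (K := K)
      (fun _ => hlipneg)
      (f := fun s => φ (1 - s) u) (g := fun s => φ (1 - s) w) (a := 0) (b := 1)
      (δ := dist (φ 1 u) (φ 1 w))
      (((hφcont u).comp (continuous_const.sub continuous_id)).continuousOn)
      (fun t _ => (hder u t).hasDerivWithinAt)
      (((hφcont w).comp (continuous_const.sub continuous_id)).continuousOn)
      (fun t _ => (hder w t).hasDerivWithinAt)
      (by show dist (φ (1-0) u) (φ (1-0) w) ≤ dist (φ 1 u) (φ 1 w); norm_num)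
    have h1 : dist (φ (1-1) u) (φ (1-1) w) ≤ dist (φ 1 u) (φ 1 w) * Real.exp ((K:ℝ) * (1 - 0)) :=
      h 1 ⟨by norm_num, le_refl 1⟩
    rw [show (1:ℝ) - 1 = 0 by norm_num, hφ0, hφ0,
      show ((K:ℝ) * (1 - 0)) = C₀ + 2 by rw [hK]; ring] at h1
    linarith [h1]
  -- stationarity on the shell
  have Vzero : ∀ q ∈ Pset 3 \ Pset (5/2), V q = 0 := by
    intro q hq
    show ψ q • wField n q = 0
    rw [hψzero q hq, zero_smul]
  have stuck : ∀ (p : R3) (t₂ : ℝ), φ t₂ p ∈ Pset 3 \ Pset (5/2) → ∀ t, φ t p = φ t₂ p := by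
    intro p t₂ hq t
    have hsta := stationary _ (Vzero _ hq)
    have h1 : φ ((t - t₂) + t₂) p = φ (t - t₂) (φ t₂ p) := group t₂ p (t - t₂)
    rw [sub_add_cancel] at h1
    rw [h1, hsta]
  -- invariance of P(3)
  have Pinv : ∀ p ∈ Pset 3, ∀ t : ℝ, φ t p ∈ Pset 3 := by
    intro p hp t
    by_cases h52 : p ∈ Pset (5/2)
    swap
    · have h := stuck p 0 (by rw [hφ0]; exact ⟨hp, h52⟩) t
      rw [h, hφ0]; exact hp
    have hz := zconst p
    have hzlo : -8 ≤ p 2 := (Pset_z hp).1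
    have hzhi : p 2 ≤ 8 := (Pset_z hp).2
    have cphi : ∀ i : Fin 3, Continuous (fun s => φ s p i) :=
      fun i => (EuclideanSpace.proj i).continuous.comp (hφcont p)
    rcases le_or_gt 0 (p 2) with hz0 | hz0
    · -- upper part : use A
      have hAcont : Continuous (fun s => (φ s p 0)^2 + (φ s p 1)^2) :=
        ((cphi 0).pow 2).add ((cphi 1).pow 2)
      have hA0 : (φ 0 p 0)^2 + (φ 0 p 1)^2 ≤ (5/2:ℝ)^2 := by
        rw [hφ0]
        rcases h52 with ⟨h, _⟩ | ⟨h, _, hzz⟩ | ⟨h, _, hzz⟩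
        · exact h
        · have h0 : p 2 = 0 := le_antisymm hzz hz0
          rw [h0] at h; simpa using h
        · have h0 : p 2 = 0 := le_antisymm hzz hz0
          rw [h0] at h; simpa using h
      by_cases hA9 : (φ t p 0)^2 + (φ t p 1)^2 ≤ 3^2
      · exact Or.inl ⟨hA9, by rw [hz t]; exact hz0, by rw [hz t]; exact hzhi⟩
      push_neg at hA9
      have h7 : (7:ℝ) ∈ Set.Icc ((φ 0 p 0)^2 + (φ 0 p 1)^2) ((φ t p 0)^2 + (φ t p 1)^2) :=
        ⟨by linarith, by linarith⟩
      obtain ⟨t₂, _, hAt₂0⟩ := intermediate_value_uIcc (a := (0:ℝ)) (b := t)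
        (hAcont.continuousOn) (Set.Icc_subset_uIcc h7)
      have hAt₂ : (φ t₂ p 0)^2 + (φ t₂ p 1)^2 = 7 := hAt₂0
      have hshell : φ t₂ p ∈ Pset 3 \ Pset (5/2) := by
        constructor
        · exact Or.inl ⟨by rw [hAt₂]; norm_num, by rw [hz t₂]; exact hz0,
            by rw [hz t₂]; exact hzhi⟩
        · intro hmem
          rcases hmem with ⟨h, _, _⟩ | ⟨h, _, hzz⟩ | ⟨h, _, hzz⟩
          · rw [hAt₂] at h; norm_num at h
          · rw [hz t₂] at hzz
            have h0 : p 2 = 0 := le_antisymm hzz hz0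
            rw [hz t₂, h0] at h
            simp only [add_zero] at h
            rw [hAt₂] at h; norm_num at h
          · rw [hz t₂] at hzz
            have h0 : p 2 = 0 := le_antisymm hzz hz0
            rw [hz t₂, h0] at h
            simp only [sub_zero] at h
            rw [hAt₂] at h; norm_num at h
      rw [stuck p t₂ hshell t]
      exact hshell.1
    · -- lower part : use D = min B C
      have hDcont : Continuous (fun s => min ((φ s p 0)^2 + (φ s p 1 + p 2)^2)
          ((φ s p 0)^2 + (φ s p 1 - p 2)^2)) :=
        (((cphi 0).pow 2).add (((cphi 1).add continuous_const).pow 2)).min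
          (((cphi 0).pow 2).add (((cphi 1).sub continuous_const).pow 2))
      have hD0 : min ((φ 0 p 0)^2 + (φ 0 p 1 + p 2)^2) ((φ 0 p 0)^2 + (φ 0 p 1 - p 2)^2)
          ≤ (5/2:ℝ)^2 := by
        rw [hφ0]
        rcases h52 with ⟨_, hzz, _⟩ | ⟨h, _, _⟩ | ⟨h, _, _⟩
        · linarith
        · exact le_trans (min_le_left _ _) h
        · exact le_trans (min_le_right _ _) h
      have hmem_of : ∀ s : ℝ, min ((φ s p 0)^2 + (φ s p 1 + p 2)^2)
          ((φ s p 0)^2 + (φ s p 1 - p 2)^2) ≤ 3^2 → φ s p ∈ Pset 3 := by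
        intro s hDs
        rcases min_le_iff.1 hDs with h | h
        · exact Or.inr (Or.inl ⟨by rw [hz s]; exact h, by rw [hz s]; exact hzlo,
            by rw [hz s]; linarith⟩)
        · exact Or.inr (Or.inr ⟨by rw [hz s]; exact h, by rw [hz s]; exact hzlo,
            by rw [hz s]; linarith⟩)
      by_cases hD9 : min ((φ t p 0)^2 + (φ t p 1 + p 2)^2) ((φ t p 0)^2 + (φ t p 1 - p 2)^2) ≤ 3^2
      · exact hmem_of t hD9
      push_neg at hD9
      have h7 : (7:ℝ) ∈ Set.Icc
          (min ((φ 0 p 0)^2 + (φ 0 p 1 + p 2)^2) ((φ 0 p 0)^2 + (φ 0 p 1 - p 2)^2))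
          (min ((φ t p 0)^2 + (φ t p 1 + p 2)^2) ((φ t p 0)^2 + (φ t p 1 - p 2)^2)) :=
        ⟨by linarith, by linarith⟩
      obtain ⟨t₂, _, hDt₂0⟩ := intermediate_value_uIcc (a := (0:ℝ)) (b := t)
        (hDcont.continuousOn) (Set.Icc_subset_uIcc h7)
      have hDt₂ : min ((φ t₂ p 0)^2 + (φ t₂ p 1 + p 2)^2) ((φ t₂ p 0)^2 + (φ t₂ p 1 - p 2)^2) = 7 :=
        hDt₂0
      have hB7 : (7:ℝ) ≤ (φ t₂ p 0)^2 + (φ t₂ p 1 + p 2)^2 := hDt₂ ▸ min_le_left _ _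
      have hC7 : (7:ℝ) ≤ (φ t₂ p 0)^2 + (φ t₂ p 1 - p 2)^2 := hDt₂ ▸ min_le_right _ _
      have hshell : φ t₂ p ∈ Pset 3 \ Pset (5/2) := by
        constructor
        · exact hmem_of t₂ (by rw [hDt₂]; norm_num)
        · intro hmem
          rcases hmem with ⟨_, hzz, _⟩ | ⟨h, _, _⟩ | ⟨h, _, _⟩
          · rw [hz t₂] at hzz; linarith
          · rw [hz t₂] at h; linarith
          · rw [hz t₂] at h; linarith
      rw [stuck p t₂ hshell t]
      exact hshell.1
    -- explicit straight-line solutions inside P(2)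
  have expl : ∀ p : R3,
      (∀ t ∈ Set.Icc (-1:ℝ) 2, p + (t * clip c (p 0 + p 1)) • eVec ∈ Pset 2) →
      φ 1 p = p + clip c (p 0 + p 1) • eVec := by
    intro p hmem
    have hsol : ∀ t ∈ Set.Ioo (-1:ℝ) 2,
        HasDerivAt (fun t : ℝ => p + (t * clip c (p 0 + p 1)) • eVec)
          (V (p + (t * clip c (p 0 + p 1)) • eVec)) t := by
      intro t ht
      have hP2 : p + (t * clip c (p 0 + p 1)) • eVec ∈ Pset 2 :=
        hmem t (Set.Ioo_subset_Icc_self ht)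
      have hψ1 : ψ (p + (t * clip c (p 0 + p 1)) • eVec) = 1 := hψone _ hP2
      have hsum : (p + (t * clip c (p 0 + p 1)) • eVec) 0
          + (p + (t * clip c (p 0 + p 1)) • eVec) 1 = p 0 + p 1 := by
        simp only [add_coord, smul_coord, eVec0, eVec1]
        ring
      have hVval : V (p + (t * clip c (p 0 + p 1)) • eVec) = clip c (p 0 + p 1) • eVec := by
        rw [hVe, hsum, hψ1, one_mul]
      rw [hVval]
      have hder : HasDerivAt (fun t : ℝ => (t * clip c (p 0 + p 1)) • eVec)
          (clip c (p 0 + p 1) • eVec) t := by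
        simpa using ((hasDerivAt_id t).mul_const (clip c (p 0 + p 1))).smul_const eVec
      simpa using hder.const_add p
    have hcont2 : ContinuousOn (fun t : ℝ => p + (t * clip c (p 0 + p 1)) • eVec)
        (Set.Icc (-1:ℝ) 2) :=
      (continuous_const.add ((continuous_id.mul continuous_const).smul
        continuous_const)).continuousOn
    have h0 : p + ((0:ℝ) * clip c (p 0 + p 1)) • eVec = p := by
      rw [zero_mul, zero_smul, add_zero]
    have h := uniqIcc p _ (-1) 2 (by norm_num) (by norm_num) hsol hcont2 h0 1
      ⟨by norm_num, by norm_num⟩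
    rw [← h, one_mul]
  -- flow on the top part of the graph
  have flowTop : ∀ z : ℝ, 0 ≤ z → z ≤ 8 → φ 1 (mk3 0 0 z) = mk3 0 0 z := by
    intro z hz1 hz2
    have hsum : (mk3 0 0 z) 0 + (mk3 0 0 z) 1 = 0 := by simp
    have hclip : clip c ((mk3 0 0 z) 0 + (mk3 0 0 z) 1) = 0 := by
      rw [hsum]; exact clip_of_abs_le (by simpa using hc0.le)
    have h := expl (mk3 0 0 z) ?_
    · rw [h, hclip, zero_smul, add_zero]
    · intro t _
      rw [hclip, mul_zero, zero_smul, add_zero]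
      exact Or.inl ⟨by norm_num, by simpa using ⟨hz1, hz2⟩⟩
  -- flow on the legs of the graph
  have flowG : ∀ (ε z : ℝ), (ε = 1 ∨ ε = -1) → -8 ≤ z → z ≤ 0 →
      φ 1 (mk3 0 (ε * z) z) =
        (if -z ≤ c then mk3 (ε * z) 0 z else mk3 (-(ε * c)) (ε * (z + c)) z) := by
    intro ε z hε hz1 hz2
    have hεabs : |ε| = 1 := by rcases hε with h | h <;> rw [h] <;> norm_num
    have hsum : (mk3 0 (ε * z) z) 0 + (mk3 0 (ε * z) z) 1 = ε * z := by simp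
    have hcsq : c^2 ≤ 1/100 := by nlinarith
    by_cases hzc : -z ≤ c
    · -- small leg : clip = ε z
      have hzsq : z^2 ≤ 1/100 := by nlinarith
      have hclip : clip c ((mk3 0 (ε * z) z) 0 + (mk3 0 (ε * z) z) 1) = ε * z := by
        rw [hsum]; apply clip_of_abs_le
        rw [abs_mul, hεabs, one_mul, abs_of_nonpos hz2]; linarith
      have h := expl (mk3 0 (ε * z) z) ?_
      · rw [if_pos hzc, h, hclip]
        refine R3_ext ?_ ?_ ?_ <;> simp <;> ring
      · intro t ht
        rw [hclip]
        have ht1 := ht.1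
        have ht2 := ht.2
        have htsq : t^2 ≤ 4 := by nlinarith
        have hkey : (t * (ε * z))^2 ≤ 1/25 := by
          have hprod : t^2 * z^2 ≤ 4 * (1/100) :=
            mul_le_mul htsq hzsq (sq_nonneg z) (by norm_num)
          rcases hε with h1 | h1 <;> subst h1 <;> nlinarith [hprod]
        rcases hε with h1 | h1
        · refine Or.inr (Or.inr ⟨?_, by simpa using hz1, by simpa using hz2⟩)
          simp only [add_coord, smul_coord, eVec0, eVec1, eVec2, mk3_c0, mk3_c1, mk3_c2]
          rw [h1] at hkey ⊢
          nlinarith [hkey]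
        · refine Or.inr (Or.inl ⟨?_, by simpa using hz1, by simpa using hz2⟩)
          simp only [add_coord, smul_coord, eVec0, eVec1, eVec2, mk3_c0, mk3_c1, mk3_c2]
          rw [h1] at hkey ⊢
          nlinarith [hkey]
    · -- long leg : clip = -(ε c)
      push_neg at hzc
      have hclip : clip c ((mk3 0 (ε * z) z) 0 + (mk3 0 (ε * z) z) 1) = -(ε * c) := by
        rw [hsum]
        rcases hε with h1 | h1
        · rw [h1, one_mul]
          unfold clip
          rw [min_eq_right (by linarith), max_eq_left (by linarith)]
          ring
        · rw [h1]
          unfold clip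
          rw [min_eq_left (by linarith), max_eq_right (by linarith)]
          ring
      have h := expl (mk3 0 (ε * z) z) ?_
      · rw [if_neg (by linarith), h, hclip]
        refine R3_ext ?_ ?_ ?_ <;> simp <;> ring
      · intro t ht
        rw [hclip]
        have ht1 := ht.1
        have ht2 := ht.2
        have htsq : t^2 ≤ 4 := by nlinarith
        have hkey : (t * (-(ε * c)))^2 ≤ 1/25 := by
          have hprod : t^2 * c^2 ≤ 4 * (1/100) :=
            mul_le_mul htsq hcsq (sq_nonneg c) (by norm_num)
          rcases hε with h1 | h1 <;> subst h1 <;> nlinarith [hprod]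
        rcases hε with h1 | h1
        · refine Or.inr (Or.inr ⟨?_, by simpa using hz1, by simpa using hz2⟩)
          simp only [add_coord, smul_coord, eVec0, eVec1, eVec2, mk3_c0, mk3_c1, mk3_c2]
          rw [h1] at hkey ⊢
          nlinarith [hkey]
        · refine Or.inr (Or.inl ⟨?_, by simpa using hz1, by simpa using hz2⟩)
          simp only [add_coord, smul_coord, eVec0, eVec1, eVec2, mk3_c0, mk3_c1, mk3_c2]
          rw [h1] at hkey ⊢
          nlinarith [hkey]
  -- the image of the graph
  have hGim : (φ 1) '' Ggraph = Ggraph' n := by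
    apply Set.Subset.antisymm
    · rintro y ⟨p, hp, rfl⟩
      rcases hp with ⟨h0, h1, hz1, hz2⟩ | ⟨ε, hε, h0, h1, hz1, hz2⟩
      · have hpeq : p = mk3 0 0 (p 2) := R3_ext (by simp [h0]) (by simp [h1]) (by simp)
        rw [hpeq, flowTop _ hz1 hz2]
        exact Or.inl ⟨rfl, rfl, hz1, hz2⟩
      · have hpeq : p = mk3 0 (ε * p 2) (p 2) := R3_ext (by simp [h0]) (by simp [h1]) (by simp)
        rw [hpeq, flowG ε (p 2) hε hz1 hz2]
        by_cases hzc : -(p 2) ≤ c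
        · rw [if_pos hzc]
          refine Or.inr (Or.inl ⟨ε, hε, rfl, rfl, ?_, by simpa using hz2⟩)
          show -(1/(10*(n:ℝ))) ≤ (mk3 (ε * p 2) 0 (p 2)) 2
          rw [← hc_def, mk3_c2]
          linarith
        · rw [if_neg hzc]
          push_neg at hzc
          refine Or.inr (Or.inr ⟨ε, hε, ?_, ?_, by simpa using hz1, ?_⟩)
          · show -(ε * c) = -ε / (10*(n:ℝ))
            rw [show -ε / (10*(n:ℝ)) = -(ε * (1/(10*(n:ℝ)))) by ring, ← hc_def]
          · show ε * (p 2 + c) = ε * ((mk3 (-(ε * c)) (ε * (p 2 + c)) (p 2)) 2 + 1/(10*(n:ℝ)))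
            rw [mk3_c2, ← hc_def]
          · show (mk3 (-(ε * c)) (ε * (p 2 + c)) (p 2)) 2 ≤ -(1/(10*(n:ℝ)))
            rw [mk3_c2, ← hc_def]
            linarith
    · rintro q (⟨h0, h1, hz1, hz2⟩ | ⟨ε, hε, h0, h1, hz1, hz2⟩ | ⟨ε, hε, h0, h1, hz1, hz2⟩)
      · refine ⟨q, Or.inl ⟨h0, h1, hz1, hz2⟩, ?_⟩
        rw [show q = mk3 0 0 (q 2) from R3_ext (by simp [h0]) (by simp [h1]) (by simp)]
        exact flowTop _ hz1 hz2
      · -- short leg of G'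
        rw [← hc_def] at hz1
        refine ⟨mk3 0 (ε * q 2) (q 2), Or.inr ⟨ε, hε, rfl, rfl, by
          show -8 ≤ (mk3 0 (ε * q 2) (q 2)) 2
          rw [mk3_c2]; linarith, by simpa using hz2⟩, ?_⟩
        rw [flowG ε (q 2) hε (by linarith) hz2, if_pos (by linarith)]
        exact R3_ext (by simp [h0]) (by simp [h1]) (by simp)
      · -- long leg of G'
        rw [← hc_def] at hz2
        have h0' : q 0 = -(ε * c) := by
          rw [h0, hc_def]; ring
        have h1' : q 1 = ε * (q 2 + c) := by
          rw [h1, hc_def]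
        refine ⟨mk3 0 (ε * q 2) (q 2), Or.inr ⟨ε, hε, rfl, rfl, by
          show -8 ≤ (mk3 0 (ε * q 2) (q 2)) 2
          rw [mk3_c2]; linarith, by
          show (mk3 0 (ε * q 2) (q 2)) 2 ≤ 0
          rw [mk3_c2]; linarith⟩, ?_⟩
        by_cases hq2c : -(q 2) ≤ c
        · have hq2 : q 2 = -c := by linarith
          rw [flowG ε (q 2) hε hz1 (by linarith), if_pos hq2c]
          refine R3_ext ?_ ?_ ?_
          · simp only [mk3_c0]; rw [h0', hq2]; ring
          · simp only [mk3_c1]; rw [h1', hq2]; ring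
          · simp
        · rw [flowG ε (q 2) hε hz1 (by linarith), if_neg hq2c]
          exact R3_ext (by simp [h0']) (by simp [h1']) (by simp)
  -- assemble the result
  have hBij : Set.BijOn (φ 1) (Pset 3) (Pset 3) := by
    refine ⟨fun p hp => Pinv p hp 1, ?_, ?_⟩
    · intro u _ w _ h
      have := inv1 u
      rw [h, inv1 w] at this
      exact this.symm
    · intro q hq
      exact ⟨φ (-1) q, Pinv q hq (-1), inv2 q⟩
  have hφ'' : ∀ (p : R3) (t : ℝ), HasDerivAt (fun s => φ s p) (ψ (φ t p) • wField n (φ t p)) t :=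
    fun p t => hφ' p t
  refine ⟨φ, hφ0, hφ'', Pinv, ?_, hBij, fun u _ w _ => grw u w,
    fun u _ w _ => grwRev u w, hGim, ?_⟩
  · -- identity on the vertical boundary
    intro p hp
    exact stationary p (Vzero p (verBoundary_shell hp)) 1
  · -- part (4)
    rintro y ⟨p, hp, rfl⟩
    obtain ⟨q, hqG, hqz, hqd⟩ := near_axis hp
    have hE1 : 1 ≤ Real.exp (C₀ + 2) := by
      have h := Real.exp_le_exp.2 (show (0:ℝ) ≤ C₀ + 2 by linarith)
      rwa [Real.exp_zero] at h
    have hE0 : (0:ℝ) < Real.exp (C₀ + 2) := Real.exp_pos _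
    refine ⟨φ 1 q, by rw [← hGim]; exact Set.mem_image_of_mem _ hqG, ?_, ?_⟩
    · rw [zconst q 1, zconst p 1, hqz]
    · have hdpq : dist p q ≤ 1/(100 * Real.exp (C₀+2) * n) := by
        have h2 : dist p q ^2 ≤ (1/(100 * Real.exp (C₀+2) * n))^2 := by
          rw [dist_sq_R3]
          have hz' : (p 2 - q 2)^2 = 0 := by rw [hqz]; ring
          rw [hz']
          linarith [hqd]
        nlinarith [dist_nonneg (x := p) (y := q), one_div_pos.2
          (by positivity : (0:ℝ) < 100 * Real.exp (C₀+2) * n)]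
      have hd1 : dist (φ 1 p) (φ 1 q) ≤ 1/(100 * (n:ℝ)) := by
        have hstep : Real.exp (C₀+2) * dist p q ≤
            Real.exp (C₀+2) * (1/(100 * Real.exp (C₀+2) * n)) :=
          mul_le_mul_of_nonneg_left hdpq hE0.le
        have heq : Real.exp (C₀+2) * (1/(100 * Real.exp (C₀+2) * n)) = 1/(100 * (n:ℝ)) := by
          field_simp
        calc dist (φ 1 p) (φ 1 q) ≤ Real.exp (C₀+2) * dist p q := grw p q
          _ ≤ 1/(100 * (n:ℝ)) := by rw [← heq]; exact hstep
      have hh := dist_sq_R3 (φ 1 p) (φ 1 q)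
      have hfin : (φ 1 p 0 - φ 1 q 0)^2 + (φ 1 p 1 - φ 1 q 1)^2 ≤ dist (φ 1 p) (φ 1 q)^2 := by
        nlinarith [sq_nonneg (φ 1 p 2 - φ 1 q 2)]
      have hlast : dist (φ 1 p) (φ 1 q)^2 ≤ (1/(100 * (n:ℝ)))^2 := by
        nlinarith [dist_nonneg (x := φ 1 p) (y := φ 1 q)]
      linarith

end
end
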